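/- arXiv:1806.00739 — 2 statements merged into one kernel-verified Lean document; each statement's English description precedes it below -/
import Mathlib

section
/- For every ratio α > 0, every threshold λ > 0 and every pair of distributions (P1,P2) on a finite alphabet X, Gutman's test with threshold λ satisfies liminf_{n→∞} −(1/n)·log β1(φ_n^Gut|P1,P2) ≥ λ and liminf_{n→∞} −(1/n)·log β2(φ_n^Gut|P1,P2) ≥ F(P1,P2,α,λ). -/
open Filter Topology MeasureTheory

namespace Classification

variable {X : Type*} [Fintype X] [DecidableEq X]

/-- `P` is a probability mass function on the finite alphabet `X`. -/
def IsDist (P : X → ℝ) : Prop := (∀ x, 0 ≤ P x) ∧ ∑ x, P x = 1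

/-- `P` has full support. -/
def FullSupport (P : X → ℝ) : Prop := ∀ x, 0 < P x

/-- Empirical distribution (type) of a sequence `x : Fin m → X`. -/
noncomputable def empDist {m : ℕ} (x : Fin m → X) : X → ℝ :=
  fun a => ((Finset.univ.filter fun i => x i = a).card : ℝ) / m

/-- Real-valued KL divergence with the usual `0 · log 0 = 0` convention. -/
noncomputable def klDivR (Q P : X → ℝ) : ℝ := ∑ x, Q x * Real.log (Q x / P x)

open Classical in
/-- Extended-real-valued KL divergence: `⊤` when `Q` is not absolutely continuous w.r.t. `P`. -/
noncomputable def klDivE (Q P : X → ℝ) : EReal :=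
  if ∀ x, P x = 0 → Q x = 0 then ((klDivR Q P : ℝ) : EReal) else ⊤

/-- The mixture `(α P1 + P2) / (1 + α)`. -/
noncomputable def mix (P1 P2 : X → ℝ) (α : ℝ) : X → ℝ :=
  fun x => (α * P1 x + P2 x) / (1 + α)

/-- Generalized Jensen–Shannon divergence
`GJS(P1,P2,α) = α D(P1 ‖ (αP1+P2)/(1+α)) + D(P2 ‖ (αP1+P2)/(1+α))`. -/
noncomputable def GJS (P1 P2 : X → ℝ) (α : ℝ) : ℝ :=
  α * klDivR P1 (mix P1 P2 α) + klDivR P2 (mix P1 P2 α)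

/-- Training sequence length `N = ⌈α n⌉`. -/
noncomputable def trainLen (α : ℝ) (n : ℕ) : ℕ := ⌈α * (n : ℝ)⌉₊

/-- Probability of observing the sequence `x` under i.i.d. sampling from `P`. -/
noncomputable def seqProb (P : X → ℝ) {m : ℕ} (x : Fin m → X) : ℝ := ∏ i, P (x i)

/-- A binary classification test: output `true` means "declare H₂",
`false` means "declare H₁". -/
abbrev BTest (X : Type*) (α : ℝ) (n : ℕ) : Type _ :=
  (Fin (trainLen α n) → X) → (Fin (trainLen α n) → X) → (Fin n → X) → Bool

/-- Type-I error probability: probability of declaring `H₂` when `Y^n ~ P1` (hypothesis H₁). -/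
noncomputable def beta1 {α : ℝ} {n : ℕ} (φ : BTest X α n) (P1 P2 : X → ℝ) : ℝ :=
  ∑ x1 : Fin (trainLen α n) → X, ∑ x2 : Fin (trainLen α n) → X, ∑ y : Fin n → X,
    if φ x1 x2 y = true then seqProb P1 x1 * seqProb P2 x2 * seqProb P1 y else 0

/-- Type-II error probability: probability of declaring `H₁` when `Y^n ~ P2` (hypothesis H₂). -/
noncomputable def beta2 {α : ℝ} {n : ℕ} (φ : BTest X α n) (P1 P2 : X → ℝ) : ℝ :=
  ∑ x1 : Fin (trainLen α n) → X, ∑ x2 : Fin (trainLen α n) → X, ∑ y : Fin n → X,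
    if φ x1 x2 y = false then seqProb P1 x1 * seqProb P2 x2 * seqProb P2 y else 0

open Classical in
/-- Gutman's test with threshold `lam`: declare `H₁` iff `GJS(T̂_{x₁}, T̂_y, α) ≤ lam`. -/
noncomputable def gutman (α lam : ℝ) (n : ℕ) : BTest X α n :=
  fun x1 _ y => if GJS (empDist x1) (empDist y) α ≤ lam then false else true

open Classical in
/-- `- log x` as an extended real, with `⊤` at `x = 0`. -/
noncomputable def negLogE (x : ℝ) : EReal :=
  if x = 0 then ⊤ else ((-Real.log x : ℝ) : EReal)

/-- Gutman's exponent function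
`F(P1,P2,α,lam) = min { α D(Q1‖P1) + D(Q2‖P2) : GJS(Q1,Q2,α) ≤ lam }` (as an inf in `EReal`). -/
noncomputable def Fexp (P1 P2 : X → ℝ) (α lam : ℝ) : EReal :=
  sInf {v : EReal | ∃ Q1 Q2 : X → ℝ, IsDist Q1 ∧ IsDist Q2 ∧ GJS Q1 Q2 α ≤ lam ∧
    v = (α : EReal) * klDivE Q1 P1 + klDivE Q2 P2}

/-- Expectation of `f` under `P`. -/
noncomputable def expect (P : X → ℝ) (f : X → ℝ) : ℝ := ∑ x, P x * f x

/-- Variance of `f` under `P`. -/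
noncomputable def varD (P : X → ℝ) (f : X → ℝ) : ℝ :=
  expect P (fun x => (f x - expect P f) ^ 2)

/-- Information density `ı₁(x) = log((1+α) P1(x) / (α P1(x) + P2(x)))`. -/
noncomputable def iDens1 (P1 P2 : X → ℝ) (α : ℝ) (x : X) : ℝ :=
  Real.log ((1 + α) * P1 x / (α * P1 x + P2 x))

/-- Information density `ı₂(x) = log((1+α) P2(x) / (α P1(x) + P2(x)))`. -/
noncomputable def iDens2 (P1 P2 : X → ℝ) (α : ℝ) (x : X) : ℝ :=
  Real.log ((1 + α) * P2 x / (α * P1 x + P2 x))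

/-- The dispersion `V(P1,P2,α) = α Var_{P1}[ı₁] + Var_{P2}[ı₂]`. -/
noncomputable def disp (P1 P2 : X → ℝ) (α : ℝ) : ℝ :=
  α * varD P1 (iDens1 P1 P2 α) + varD P2 (iDens2 P1 P2 α)

/-- The standard Gaussian cumulative distribution function `Φ`. -/
noncomputable def stdCDF (x : ℝ) : ℝ :=
  (Real.sqrt (2 * Real.pi))⁻¹ * ∫ t in Set.Iic x, Real.exp (-t ^ 2 / 2)

/-- The inverse standard Gaussian cdf `Φ⁻¹`. -/
noncomputable def stdCDFInv (p : ℝ) : ℝ := sInf {x : ℝ | p ≤ stdCDF x}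

/-- The non-asymptotic fundamental limit `λ*(n, α, ε | P1, P2)` for binary classification. -/
noncomputable def lamStar (α : ℝ) (n : ℕ) (ε : ℝ) (P1 P2 : X → ℝ) : ℝ :=
  sSup {lam : ℝ | 0 ≤ lam ∧ ∃ φ : BTest X α n,
    (∀ Q1 Q2 : X → ℝ, IsDist Q1 → IsDist Q2 →
      beta1 φ Q1 Q2 ≤ Real.exp (-((n : ℝ) * lam))) ∧
    beta2 φ P1 P2 ≤ ε}

/-- Rényi divergence of order `γ`. -/
noncomputable def renyi (γ : ℝ) (P1 P2 : X → ℝ) : ℝ :=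
  (1 / (γ - 1)) * Real.log (∑ x, P1 x ^ γ * P2 x ^ (1 - γ))

/-- The fundamental limit `τ*(n, α, ε | φ_n^Gut, P1, P2)` in the dual setting for Gutman's test. -/
noncomputable def tauStarGut (α : ℝ) (n : ℕ) (ε : ℝ) (P1 P2 : X → ℝ) : ℝ :=
  sSup {τ : ℝ | 0 ≤ τ ∧ ∃ lam : ℝ, 0 ≤ lam ∧
    (∀ Q1 Q2 : X → ℝ, IsDist Q1 → IsDist Q2 →
      beta1 (gutman α lam n) Q1 Q2 ≤ ε) ∧
    beta2 (gutman α lam n) P1 P2 ≤ Real.exp (-((n : ℝ) * τ))}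

/-- A two-sample homogeneity test: `true` means "declare H₂" (different distributions). -/
abbrev TTest (X : Type*) (α : ℝ) (n : ℕ) : Type _ :=
  (Fin (trainLen α n) → X) → (Fin n → X) → Bool

/-- False-alarm probability of a two-sample test. -/
noncomputable def betaFA {α : ℝ} {n : ℕ} (φ : TTest X α n) (P1 : X → ℝ) : ℝ :=
  ∑ x : Fin (trainLen α n) → X, ∑ y : Fin n → X,
    if φ x y = true then seqProb P1 x * seqProb P1 y else 0

/-- Miss-detection probability of a two-sample test. -/
noncomputable def betaMD {α : ℝ} {n : ℕ} (φ : TTest X α n) (P1 P2 : X → ℝ) : ℝ :=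
  ∑ x : Fin (trainLen α n) → X, ∑ y : Fin n → X,
    if φ x y = false then seqProb P1 x * seqProb P2 y else 0

/-- The fundamental limit `ξ*(n, α, ε | P1, P2)` for two-sample homogeneity testing. -/
noncomputable def xiStar (α : ℝ) (n : ℕ) (ε : ℝ) (P1 P2 : X → ℝ) : ℝ :=
  sSup {lam : ℝ | 0 ≤ lam ∧ ∃ φ : TTest X α n,
    (∀ Q1 : X → ℝ, IsDist Q1 → betaFA φ Q1 ≤ Real.exp (-((n : ℝ) * lam))) ∧
    betaMD φ P1 P2 ≤ ε}

/-- An M-ary classification test with the rejection option: `some j` means "declare H_j",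
`none` means "reject". -/
abbrev MTest (X : Type*) (M : ℕ) (α : ℝ) (n : ℕ) : Type _ :=
  (Fin M → Fin (trainLen α n) → X) → (Fin n → X) → Option (Fin M)

/-- Type-`j` error probability: probability of declaring some hypothesis other than
`H_j` or rejection, under `H_j`. -/
noncomputable def betaM {M : ℕ} {α : ℝ} {n : ℕ} (ψ : MTest X M α n)
    (P : Fin M → X → ℝ) (j : Fin M) : ℝ :=
  ∑ xs : Fin M → Fin (trainLen α n) → X, ∑ y : Fin n → X,
    if ψ xs y ≠ some j ∧ ψ xs y ≠ none then
      (∏ i, seqProb (P i) (xs i)) * seqProb (P j) y else 0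

/-- Type-`j` rejection probability: probability of rejecting under `H_j`. -/
noncomputable def zetaM {M : ℕ} {α : ℝ} {n : ℕ} (ψ : MTest X M α n)
    (P : Fin M → X → ℝ) (j : Fin M) : ℝ :=
  ∑ xs : Fin M → Fin (trainLen α n) → X, ∑ y : Fin n → X,
    if ψ xs y = none then (∏ i, seqProb (P i) (xs i)) * seqProb (P j) y else 0

/-- The fundamental limit `λ*(n, α, ε | P)` for M-ary classification with rejection. -/
noncomputable def lamStarM (M : ℕ) (α : ℝ) (n : ℕ) (ε : Fin M → ℝ)
    (P : Fin M → X → ℝ) : ℝ :=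
  sSup {lam : ℝ | 0 ≤ lam ∧ ∃ ψ : MTest X M α n,
    (∀ Q : Fin M → X → ℝ, (∀ i, IsDist (Q i)) → ∀ j,
      betaM ψ Q j ≤ Real.exp (-((n : ℝ) * lam))) ∧
    (∀ j, zetaM ψ P j ≤ ε j)}

open Classical in
/-- Gutman's M-ary test with rejection and threshold `lam`. -/
noncomputable def gutmanM (M : ℕ) [NeZero M] (α lam : ℝ) (n : ℕ) : MTest X M α n :=
  fun xs y =>
    if ∃ i k : Fin M, i ≠ k ∧ GJS (empDist (xs i)) (empDist y) α ≤ lam ∧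
        GJS (empDist (xs k)) (empDist y) α ≤ lam then none
    else if h : ∃ j : Fin M, GJS (empDist (xs j)) (empDist y) α ≤ lam then some h.choose
    else some 0

/-- The fundamental limit `τ*(n, α, ε | Ψ_n^Gut, P)` in the dual setting for
Gutman's M-ary test. -/
noncomputable def tauStarGutM (M : ℕ) [NeZero M] (α : ℝ) (n : ℕ) (ε : ℝ)
    (P : Fin M → X → ℝ) : ℝ :=
  sSup {τ : ℝ | 0 ≤ τ ∧ ∃ lam : ℝ, 0 ≤ lam ∧
    (∀ Q : Fin M → X → ℝ, (∀ i, IsDist (Q i)) → ∀ j,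
      betaM (gutmanM M α lam n) Q j ≤ ε) ∧
    (∀ j, zetaM (gutmanM M α lam n) P j ≤ Real.exp (-((n : ℝ) * τ)))}

/-- Generalized divergence of three distributions
`D_γ(P1,P2,P3) = (γ-1)⁻¹ log Σ_x P1(x)^{1-γ} P2(x)^{γ/2} P3(x)^{γ/2}`. -/
noncomputable def genDiv (γ : ℝ) (P1 P2 P3 : X → ℝ) : ℝ :=
  (1 / (γ - 1)) * Real.log (∑ x, P1 x ^ (1 - γ) * P2 x ^ (γ / 2) * P3 x ^ (γ / 2))

/-- A binary classification test with the rejection option: `some 0` means "declare H₁",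
`some 1` means "declare H₂", `none` means "reject". -/
abbrev RTest (X : Type*) (α : ℝ) (n : ℕ) : Type _ :=
  (Fin (trainLen α n) → X) → (Fin (trainLen α n) → X) → (Fin n → X) → Option (Fin 2)

/-- Type-1 error probability of a rejection test: declare `H₂` under `H₁`. -/
noncomputable def beta1R {α : ℝ} {n : ℕ} (ψ : RTest X α n) (P1 P2 : X → ℝ) : ℝ :=
  ∑ x1 : Fin (trainLen α n) → X, ∑ x2 : Fin (trainLen α n) → X, ∑ y : Fin n → X,
    if ψ x1 x2 y = some 1 then seqProb P1 x1 * seqProb P2 x2 * seqProb P1 y else 0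

/-- Type-2 error probability of a rejection test: declare `H₁` under `H₂`. -/
noncomputable def beta2R {α : ℝ} {n : ℕ} (ψ : RTest X α n) (P1 P2 : X → ℝ) : ℝ :=
  ∑ x1 : Fin (trainLen α n) → X, ∑ x2 : Fin (trainLen α n) → X, ∑ y : Fin n → X,
    if ψ x1 x2 y = some 0 then seqProb P1 x1 * seqProb P2 x2 * seqProb P2 y else 0

open Classical in
/-- Type-`j` rejection probability of a binary rejection test. -/
noncomputable def zetaR {α : ℝ} {n : ℕ} (ψ : RTest X α n) (P1 P2 : X → ℝ) (j : Fin 2) : ℝ :=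
  ∑ x1 : Fin (trainLen α n) → X, ∑ x2 : Fin (trainLen α n) → X, ∑ y : Fin n → X,
    if ψ x1 x2 y = none then
      seqProb P1 x1 * seqProb P2 x2 * seqProb (if j = 0 then P1 else P2) y else 0

/-- A binary test is type-based if it depends on the data only through the
triple of empirical distributions. -/
def TypeBasedB {α : ℝ} {n : ℕ} (φ : BTest X α n) : Prop :=
  ∀ x1 x1' x2 x2' : Fin (trainLen α n) → X, ∀ y y' : Fin n → X,
    empDist x1 = empDist x1' → empDist x2 = empDist x2' → empDist y = empDist y' →
      φ x1 x2 y = φ x1' x2' y'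

/-- An M-ary test is type-based if it depends on the data only through the
tuple of empirical distributions. -/
def TypeBasedM {M : ℕ} {α : ℝ} {n : ℕ} (ψ : MTest X M α n) : Prop :=
  ∀ xs xs' : Fin M → Fin (trainLen α n) → X, ∀ y y' : Fin n → X,
    (∀ i, empDist (xs i) = empDist (xs' i)) → empDist y = empDist y' →
      ψ xs y = ψ xs' y'

open Classical in
/-- Probability of an event under hypothesis `H₂` in the binary setup. -/
noncomputable def prH2E (α : ℝ) (n : ℕ) (P1 P2 : X → ℝ)
    (E : (Fin (trainLen α n) → X) → (Fin (trainLen α n) → X) → (Fin n → X) → Prop) : ℝ :=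
  ∑ x1 : Fin (trainLen α n) → X, ∑ x2 : Fin (trainLen α n) → X, ∑ y : Fin n → X,
    if E x1 x2 y then seqProb P1 x1 * seqProb P2 x2 * seqProb P2 y else 0

open Classical in
/-- Probability of an event under hypothesis `H_j` in the M-ary setup. -/
noncomputable def prHjM (M : ℕ) (α : ℝ) (n : ℕ) (P : Fin M → X → ℝ) (j : Fin M)
    (E : (Fin M → Fin (trainLen α n) → X) → (Fin n → X) → Prop) : ℝ :=
  ∑ xs : Fin M → Fin (trainLen α n) → X, ∑ y : Fin n → X,
    if E xs y then (∏ i, seqProb (P i) (xs i)) * seqProb (P j) y else 0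

/-- `η_n(α) = |X| log(n+1)/n + 2|X| log(1+αn)/(αn)`. -/
noncomputable def etaN (X : Type*) [Fintype X] (α : ℝ) (n : ℕ) : ℝ :=
  (Fintype.card X : ℝ) * Real.log ((n : ℝ) + 1) / n +
    2 * (Fintype.card X : ℝ) * Real.log (1 + α * n) / (α * n)

/-- `η_{n,M} = M |X| log(nα+1)/(nα) + |X| log(n+1)/n`. -/
noncomputable def etaNM (X : Type*) [Fintype X] (M : ℕ) (α : ℝ) (n : ℕ) : ℝ :=
  (M : ℝ) * (Fintype.card X : ℝ) * Real.log ((n : ℝ) * α + 1) / ((n : ℝ) * α) +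
    (Fintype.card X : ℝ) * Real.log ((n : ℝ) + 1) / n

/-- `Q` is an `m`-type: the empirical distribution of some sequence of length `m`. -/
def IsTypeDist (m : ℕ) (Q : X → ℝ) : Prop := ∃ x : Fin m → X, empDist x = Q

/-- The type-restricted exponent function `F_n`. -/
noncomputable def Fn (n : ℕ) (P1 P2 : X → ℝ) (α lam : ℝ) : ℝ :=
  sInf {v : ℝ | ∃ Q1 Q2 : X → ℝ, IsTypeDist (trainLen α n) Q1 ∧ IsTypeDist n Q2 ∧
    GJS Q1 Q2 α ≤ lam ∧ v = α * klDivR Q1 P1 + klDivR Q2 P2}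

/-- The second smallest value of a finite family of reals:
`min_{i ≠ j} max (v i) (v j)`. -/
noncomputable def secondMin {M : ℕ} (v : Fin M → ℝ) : ℝ :=
  sInf {t : ℝ | ∃ i j : Fin M, i ≠ j ∧ t = max (v i) (v j)}

/-- The tilted distribution `P^{(γ)}` with `γ = α/(1+α)`. -/
noncomputable def tilt (α : ℝ) (P1 P2 : X → ℝ) : X → ℝ :=
  fun x => P1 x ^ (α / (1 + α)) * P2 x ^ (1 / (1 + α)) /
    ∑ a, P1 a ^ (α / (1 + α)) * P2 a ^ (1 / (1 + α))

end Classification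

/-!
Method of types. A sequence `x` of length `m` and type `T` has `P^m(x) = e^{-m D(T‖P)} T^m(x)`,
and as there are at most `(m + 1)^|X|` types, summing `T^m(x)` over all sequences costs only a
polynomial factor. Hence, since `N ≥ αn`, an event on which
`α D(T_{x₁}‖P₁) + D(T_y‖Q) ≥ c` has probability at most `poly(n) e^{-nc}`; the second training
sequence is ignored by the test and integrates out. On the type-I error event
`GJS(T_{x₁}, T_y, α) > λ` we may take `c = λ`, because the compensation identity
`α D(Q₁‖P) + D(Q₂‖P) = GJS(Q₁, Q₂, α) + (1 + α) D(mix‖P)` bounds GJS by the exponent; on the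
type-II error event `GJS ≤ λ` we may take any `c < F(P₁, P₂, α, λ)`, by the definition of `F`.
-/

namespace Classification

open Finset Real

variable {X : Type*}

/-- The support condition `Q ≪ P`. -/
def AbsCont (Q P : X → ℝ) : Prop := ∀ a, P a = 0 → Q a = 0

lemma absCont_mix {α : ℝ} {Q1 Q2 P : X → ℝ} (h1 : AbsCont Q1 P) (h2 : AbsCont Q2 P) :
    AbsCont (mix Q1 Q2 α) P := fun a ha => by simp [mix, h1 a ha, h2 a ha]

lemma mul_log_div_eq_add {q r s : ℝ} (hr : r ≠ 0) (hs : s ≠ 0) :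
    q * log (q / r) = q * log (q / s) + q * log (s / r) := by
  rcases eq_or_ne q 0 with rfl | hq
  · simp
  rw [log_div hq hr, log_div hq hs, log_div hs hr]
  ring

lemma seqProb_nonneg {P : X → ℝ} (hP : ∀ a, 0 ≤ P a) {m : ℕ} (x : Fin m → X) :
    0 ≤ seqProb P x :=
  prod_nonneg fun i _ => hP (x i)

section Divergence

variable [Fintype X]

lemma klDivE_of_absCont {Q P : X → ℝ} (h : AbsCont Q P) : klDivE Q P = klDivR Q P := if_pos h

lemma Fexp_le {α lam : ℝ} {P1 P2 Q1 Q2 : X → ℝ} (hQ1 : IsDist Q1) (hQ2 : IsDist Q2)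
    (hlam : GJS Q1 Q2 α ≤ lam) (h1 : AbsCont Q1 P1) (h2 : AbsCont Q2 P2) :
    Fexp P1 P2 α lam ≤ ((α * klDivR Q1 P1 + klDivR Q2 P2 : ℝ) : EReal) := by
  refine sInf_le ⟨Q1, Q2, hQ1, hQ2, hlam, ?_⟩
  rw [klDivE_of_absCont h1, klDivE_of_absCont h2]
  norm_cast

lemma sum_sub_sum_le_klDivR {Q P : X → ℝ} (hQ : ∀ a, 0 ≤ Q a) (hP : ∀ a, 0 ≤ P a)
    (h : AbsCont Q P) : ∑ a, Q a - ∑ a, P a ≤ klDivR Q P := by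
  rw [← sum_sub_distrib]
  refine sum_le_sum fun a _ => ?_
  rcases (hQ a).eq_or_lt with hq | hq
  · simp [← hq, hP a]
  have hp : 0 < P a := (hP a).lt_of_ne fun h0 => hq.ne' (h a h0.symm)
  have hlog := one_sub_inv_le_log_of_pos (div_pos hq hp)
  rw [inv_div] at hlog
  calc Q a - P a = Q a * (1 - P a / Q a) := by field_simp
    _ ≤ Q a * log (Q a / P a) := by gcongr

lemma klDivR_nonneg {Q P : X → ℝ} (hQ : IsDist Q) (hP : IsDist P) (h : AbsCont Q P) :
    0 ≤ klDivR Q P := by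
  have := sum_sub_sum_le_klDivR hQ.1 hP.1 h
  rwa [hQ.2, hP.2, sub_self] at this

lemma isDist_mix {α : ℝ} (hα : 0 ≤ α) {Q1 Q2 : X → ℝ} (hQ1 : IsDist Q1) (hQ2 : IsDist Q2) :
    IsDist (mix Q1 Q2 α) := by
  refine ⟨fun a => by have := hQ1.1 a; have := hQ2.1 a; unfold mix; positivity, ?_⟩
  simp only [mix, ← sum_div, sum_add_distrib, ← mul_sum, hQ1.2, hQ2.2]
  field_simp
  ring

/-- The compensation identity. -/
lemma add_klDivR_eq_GJS_add {α : ℝ} (hα : 0 < α) {Q1 Q2 P : X → ℝ} (hQ1 : ∀ a, 0 ≤ Q1 a)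
    (hQ2 : ∀ a, 0 ≤ Q2 a) (h1 : AbsCont Q1 P) (h2 : AbsCont Q2 P) :
    α * klDivR Q1 P + klDivR Q2 P = GJS Q1 Q2 α + (1 + α) * klDivR (mix Q1 Q2 α) P := by
  simp only [GJS, klDivR, mul_sum, ← sum_add_distrib]
  refine sum_congr rfl fun a _ => ?_
  set M := mix Q1 Q2 α a
  have hM : (1 + α) * M = α * Q1 a + Q2 a := by simp only [M, mix]; field_simp
  by_cases hPa : P a = 0
  · simp [M, mix, h1 a hPa, h2 a hPa]
  by_cases hMa : M = 0
  · have : Q1 a = 0 ∧ Q2 a = 0 := by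
      have := hQ1 a; have := hQ2 a
      constructor <;> nlinarith
    simp [hMa, this.1, this.2]
  rw [mul_log_div_eq_add hPa hMa, mul_log_div_eq_add (q := Q2 a) hPa hMa]
  linear_combination -log (M / P a) * hM

lemma GJS_le_add_klDivR {α : ℝ} (hα : 0 < α) {Q1 Q2 P : X → ℝ} (hQ1 : IsDist Q1)
    (hQ2 : IsDist Q2) (hP : IsDist P) (h1 : AbsCont Q1 P) (h2 : AbsCont Q2 P) :
    GJS Q1 Q2 α ≤ α * klDivR Q1 P + klDivR Q2 P := by
  rw [add_klDivR_eq_GJS_add hα hQ1.1 hQ2.1 h1 h2]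
  have := klDivR_nonneg (isDist_mix hα.le hQ1 hQ2) hP (absCont_mix h1 h2)
  nlinarith

lemma sum_seqProb (P : X → ℝ) (m : ℕ) : ∑ x : Fin m → X, seqProb P x = (∑ a, P a) ^ m :=
  (Fintype.sum_pow P m).symm

lemma sum_seqProb_eq_one {P : X → ℝ} (hP : ∑ a, P a = 1) (m : ℕ) :
    ∑ x : Fin m → X, seqProb P x = 1 := by
  rw [sum_seqProb, hP, one_pow]

end Divergence

section Types

variable [DecidableEq X]

def typeCount {m : ℕ} (x : Fin m → X) (a : X) : ℕ := #{i | x i = a}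

lemma empDist_eq_typeCount_div {m : ℕ} (x : Fin m → X) (a : X) :
    empDist x a = typeCount x a / m := rfl

lemma typeCount_le {m : ℕ} (x : Fin m → X) (a : X) : typeCount x a ≤ m := by
  simpa [typeCount] using card_filter_le univ fun i => x i = a

lemma empDist_nonneg {m : ℕ} (x : Fin m → X) (a : X) : 0 ≤ empDist x a := by
  rw [empDist_eq_typeCount_div]
  positivity

lemma seqProb_empDist_nonneg {m : ℕ} (x : Fin m → X) : 0 ≤ seqProb (empDist x) x :=
  seqProb_nonneg (empDist_nonneg x) x

lemma empDist_of_length_zero (x : Fin 0 → X) : empDist x = 0 := by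
  ext a
  simp [empDist_eq_typeCount_div]

variable [Fintype X]

lemma sum_typeCount {m : ℕ} (x : Fin m → X) : ∑ a, typeCount x a = m := by
  simpa [typeCount] using
    (card_eq_sum_card_fiberwise (s := univ) (t := univ) fun i _ => mem_univ (x i)).symm

lemma isDist_empDist {m : ℕ} (hm : 0 < m) (x : Fin m → X) : IsDist (empDist x) := by
  refine ⟨empDist_nonneg x, ?_⟩
  simp only [empDist_eq_typeCount_div, ← sum_div, ← Nat.cast_sum, sum_typeCount]
  exact div_self (by positivity)

lemma seqProb_eq_prod_pow_typeCount (P : X → ℝ) {m : ℕ} (x : Fin m → X) :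
    seqProb P x = ∏ a, P a ^ typeCount x a := by
  rw [seqProb, ← prod_fiberwise' univ x P]
  simp [typeCount]

lemma seqProb_eq_zero_of_not_absCont {P : X → ℝ} {m : ℕ} {x : Fin m → X}
    (h : ¬ AbsCont (empDist x) P) : seqProb P x = 0 := by
  obtain ⟨a, hPa, hxa⟩ : ∃ a, P a = 0 ∧ empDist x a ≠ 0 := by simpa [AbsCont] using h
  have hcount : typeCount x a ≠ 0 := by
    rintro h0
    simp [empDist_eq_typeCount_div, h0] at hxa
  rw [seqProb_eq_prod_pow_typeCount]
  exact prod_eq_zero (mem_univ a) (by rw [hPa, zero_pow hcount])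

lemma seqProb_eq_exp_mul {P : X → ℝ} (hP : ∀ a, 0 ≤ P a) {m : ℕ} {x : Fin m → X}
    (h : AbsCont (empDist x) P) :
    seqProb P x = exp (-(m * klDivR (empDist x) P)) * seqProb (empDist x) x := by
  rw [seqProb_eq_prod_pow_typeCount, seqProb_eq_prod_pow_typeCount, klDivR, mul_sum,
    ← sum_neg_distrib, exp_sum, ← prod_mul_distrib]
  refine prod_congr rfl fun a _ => ?_
  rcases eq_or_ne (typeCount x a) 0 with h0 | h0
  · simp [h0, empDist_eq_typeCount_div]
  have hm : (0 : ℝ) < m := by exact_mod_cast (Nat.pos_of_ne_zero h0).trans_le (typeCount_le x a)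
  have hT : 0 < empDist x a := by rw [empDist_eq_typeCount_div]; positivity
  have hPa : 0 < P a := (hP a).lt_of_ne fun h0 => hT.ne' (h a h0.symm)
  have hmT : m * empDist x a = typeCount x a := by rw [empDist_eq_typeCount_div]; field_simp
  rw [← mul_assoc, hmT, ← mul_neg, ← log_inv, inv_div, exp_nat_mul, exp_log (div_pos hPa hT),
    ← mul_pow, div_mul_cancel₀ _ hT.ne']

lemma sum_seqProb_empDist {m : ℕ} (x₀ : Fin m → X) :
    ∑ x : Fin m → X, seqProb (empDist x₀) x = 1 := by
  rcases m.eq_zero_or_pos with rfl | hm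
  · rw [sum_seqProb, pow_zero]
  · exact sum_seqProb_eq_one (isDist_empDist hm x₀).2 m

/-- There are at most `(m + 1)^|X|` types, and each type class has probability at most one
under its own type. -/
lemma sum_seqProb_empDist_le (m : ℕ) :
    ∑ x : Fin m → X, seqProb (empDist x) x ≤ ((m + 1 : ℕ) : ℝ) ^ Fintype.card X := by
  let g : (Fin m → X) → X → Fin (m + 1) := fun x a =>
    ⟨typeCount x a, Nat.lt_succ_of_le (typeCount_le x a)⟩
  have hfiber (c : X → Fin (m + 1)) : ∑ x ∈ univ with g x = c, seqProb (empDist x) x ≤ 1 := by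
    rcases (univ.filter fun x => g x = c).eq_empty_or_nonempty with h | ⟨x₀, hx₀⟩
    · simp [h]
    have hsame : ∀ x ∈ univ.filter fun x => g x = c, empDist x = empDist x₀ := by
      intro x hx
      ext a
      have := congrArg Fin.val (congrFun ((mem_filter.1 hx).2.trans (mem_filter.1 hx₀).2.symm) a)
      simp only [empDist_eq_typeCount_div, g] at this ⊢
      rw [this]
    calc ∑ x ∈ univ with g x = c, seqProb (empDist x) x
        = ∑ x ∈ univ with g x = c, seqProb (empDist x₀) x :=
          sum_congr rfl fun x hx => by rw [hsame x hx]
      _ ≤ ∑ x, seqProb (empDist x₀) x :=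
        sum_le_sum_of_subset_of_nonneg (subset_univ _) fun x _ _ =>
          seqProb_nonneg (empDist_nonneg x₀) x
      _ = 1 := sum_seqProb_empDist x₀
  calc ∑ x : Fin m → X, seqProb (empDist x) x
      = ∑ c, ∑ x ∈ univ with g x = c, seqProb (empDist x) x := (sum_fiberwise _ g _).symm
    _ ≤ ∑ _c : X → Fin (m + 1), (1 : ℝ) := sum_le_sum fun c _ => hfiber c
    _ = ((m + 1 : ℕ) : ℝ) ^ Fintype.card X := by simp

end Types

lemma tendsto_log_add_mul_log_div_atTop (C k : ℝ) :
    Tendsto (fun n : ℕ => (log C + k * log n) / n) atTop (𝓝 0) := by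
  have hlog : Tendsto (fun n : ℕ => log n / n) atTop (𝓝 0) := by
    have := (tendsto_pow_log_div_mul_add_atTop 1 0 1 one_ne_zero).comp tendsto_natCast_atTop_atTop
    simpa [Function.comp_def] using this
  have := (tendsto_const_div_atTop_nhds_zero_nat (log C)).add (hlog.const_mul k)
  simpa [add_div, mul_div_assoc] using this

/-- Polynomial prefactors do not change error exponents. -/
lemma le_liminf_negLogE {β : ℕ → ℝ} (hβ : ∀ n, 0 ≤ β n) {C : ℝ} (hC : 0 < C) (k : ℕ) (c : ℝ)
    (hle : ∀ᶠ n : ℕ in atTop, β n ≤ C * n ^ k * exp (-(n * c))) :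
    (c : EReal) ≤ liminf (fun n : ℕ => (((n : ℝ)⁻¹ : ℝ) : EReal) * negLogE (β n)) atTop := by
  refine EReal.ge_of_forall_gt_iff_ge.1 fun r hr => le_liminf_of_le (by isBoundedDefault) ?_
  have hrc : r < c := EReal.coe_lt_coe_iff.1 hr
  have hsmall := (tendsto_log_add_mul_log_div_atTop C k).eventually (gt_mem_nhds (sub_pos.2 hrc))
  filter_upwards [hle, hsmall, eventually_gt_atTop 0] with n hβn hn hpos
  have hn' : (0 : ℝ) < n := by exact_mod_cast hpos
  rcases (hβ n).eq_or_lt with h0 | hβpos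
  · rw [negLogE, if_pos h0.symm, EReal.coe_mul_top_of_pos (inv_pos.2 hn')]
    exact le_top
  rw [negLogE, if_neg hβpos.ne', ← EReal.coe_mul, EReal.coe_le_coe_iff, le_inv_mul_iff₀ hn']
  have hlogβ : log (β n) ≤ log C + k * log n - n * c := by
    have := log_le_log hβpos hβn
    rwa [log_mul (by positivity) (exp_pos _).ne', log_mul hC.ne' (by positivity), log_pow,
      log_exp, ← sub_eq_add_neg] at this
  rw [div_lt_iff₀ hn'] at hn
  linarith

lemma trainLen_add_one_le {α : ℝ} (hα : 0 ≤ α) {n : ℕ} (hn : 0 < n) :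
    ((trainLen α n + 1 : ℕ) : ℝ) ≤ (α + 2) * n := by
  have hceil := Nat.ceil_lt_add_one (mul_nonneg hα n.cast_nonneg)
  have hn' : (1 : ℝ) ≤ n := by exact_mod_cast hn
  push_cast [trainLen]
  nlinarith

lemma le_trainLen (α : ℝ) (n : ℕ) : α * n ≤ trainLen α n :=
  Nat.le_ceil _

lemma trainLen_pos {α : ℝ} (hα : 0 < α) {n : ℕ} (hn : 0 < n) : 0 < trainLen α n :=
  Nat.ceil_pos.2 (by positivity)

section Events

variable [Fintype X]

open Classical in
/-- Probability of the event `E` when `x ~ P^N` and `y ~ Q^n` are independent. -/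
noncomputable def pairProb {N n : ℕ} (P Q : X → ℝ) (E : (Fin N → X) → (Fin n → X) → Prop) : ℝ :=
  ∑ x : Fin N → X, ∑ y : Fin n → X, if E x y then seqProb P x * seqProb Q y else 0

lemma pairProb_nonneg {P Q : X → ℝ} (hP : ∀ a, 0 ≤ P a) (hQ : ∀ a, 0 ≤ Q a) {N n : ℕ}
    (E : (Fin N → X) → (Fin n → X) → Prop) : 0 ≤ pairProb P Q E :=
  sum_nonneg fun x _ => sum_nonneg fun y _ => by
    split_ifs
    · exact mul_nonneg (seqProb_nonneg hP x) (seqProb_nonneg hQ y)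
    · exact le_rfl

variable [DecidableEq X]

lemma beta1_gutman {α lam : ℝ} {n : ℕ} {P1 P2 : X → ℝ} (h2 : ∑ a, P2 a = 1) :
    beta1 (gutman α lam n) P1 P2 =
      pairProb (N := trainLen α n) (n := n) P1 P1 fun x y =>
        lam < GJS (empDist x) (empDist y) α := by
  rw [beta1, pairProb, sum_congr rfl fun x1 _ => sum_comm]
  refine sum_congr rfl fun x1 _ => sum_congr rfl fun y _ => ?_
  by_cases h : GJS (empDist x1) (empDist y) α ≤ lam
  · simp [gutman, h]
  · simp [gutman, h, ← sum_mul, ← mul_sum, sum_seqProb_eq_one h2]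

lemma beta2_gutman {α lam : ℝ} {n : ℕ} {P1 P2 : X → ℝ} (h2 : ∑ a, P2 a = 1) :
    beta2 (gutman α lam n) P1 P2 =
      pairProb (N := trainLen α n) (n := n) P1 P2 fun x y =>
        GJS (empDist x) (empDist y) α ≤ lam := by
  rw [beta2, pairProb, sum_congr rfl fun x1 _ => sum_comm]
  refine sum_congr rfl fun x1 _ => sum_congr rfl fun y _ => ?_
  by_cases h : GJS (empDist x1) (empDist y) α ≤ lam
  · simp [gutman, h, ← sum_mul, ← mul_sum, sum_seqProb_eq_one h2]
  · simp [gutman, h]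

lemma klDivR_empDist_nonneg {P : X → ℝ} (hP : IsDist P) {m : ℕ} {x : Fin m → X}
    (h : AbsCont (empDist x) P) : 0 ≤ klDivR (empDist x) P := by
  rcases m.eq_zero_or_pos with rfl | hm
  · simp [empDist_of_length_zero, klDivR]
  · exact klDivR_nonneg (isDist_empDist hm x) hP h

lemma seqProb_mul_seqProb_le {α : ℝ} {N n : ℕ} (hN : α * n ≤ N) {P Q : X → ℝ} (hP : IsDist P)
    (hQ : IsDist Q) {c : ℝ} {x : Fin N → X} {y : Fin n → X}
    (hc : AbsCont (empDist x) P → AbsCont (empDist y) Q →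
      c ≤ α * klDivR (empDist x) P + klDivR (empDist y) Q) :
    seqProb P x * seqProb Q y ≤
      exp (-(n * c)) * (seqProb (empDist x) x * seqProb (empDist y) y) := by
  have hTx := seqProb_empDist_nonneg x
  have hTy := seqProb_empDist_nonneg y
  by_cases hx : AbsCont (empDist x) P
  swap
  · rw [seqProb_eq_zero_of_not_absCont hx, zero_mul]; positivity
  by_cases hy : AbsCont (empDist y) Q
  swap
  · rw [seqProb_eq_zero_of_not_absCont hy, mul_zero]; positivity
  have hDx := klDivR_empDist_nonneg hP hx
  have hexponent : n * c ≤ N * klDivR (empDist x) P + n * klDivR (empDist y) Q := by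
    nlinarith [hc hx hy, mul_le_mul_of_nonneg_right hN hDx]
  rw [seqProb_eq_exp_mul hP.1 hx, seqProb_eq_exp_mul hQ.1 hy]
  calc _ = exp (-(N * klDivR (empDist x) P + n * klDivR (empDist y) Q)) *
        (seqProb (empDist x) x * seqProb (empDist y) y) := by
        rw [neg_add, exp_add]; ring
    _ ≤ _ := by gcongr

lemma pairProb_le {α : ℝ} {N n : ℕ} (hN : α * n ≤ N) {P Q : X → ℝ} (hP : IsDist P)
    (hQ : IsDist Q) (c : ℝ) {E : (Fin N → X) → (Fin n → X) → Prop}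
    (hE : ∀ x y, E x y → AbsCont (empDist x) P → AbsCont (empDist y) Q →
      c ≤ α * klDivR (empDist x) P + klDivR (empDist y) Q) :
    pairProb P Q E ≤
      ((N + 1 : ℕ) : ℝ) ^ Fintype.card X * ((n + 1 : ℕ) : ℝ) ^ Fintype.card X * exp (-(n * c)) := by
  calc pairProb P Q E
      ≤ ∑ x : Fin N → X, ∑ y : Fin n → X,
          exp (-(n * c)) * (seqProb (empDist x) x * seqProb (empDist y) y) := by
        refine sum_le_sum fun x _ => sum_le_sum fun y _ => ?_
        split_ifs with hxy
        · exact seqProb_mul_seqProb_le hN hP hQ (hE x y hxy)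
        · have := seqProb_empDist_nonneg x; have := seqProb_empDist_nonneg y; positivity
    _ = exp (-(n * c)) * ((∑ x : Fin N → X, seqProb (empDist x) x) *
          ∑ y : Fin n → X, seqProb (empDist y) y) := by
        rw [sum_mul_sum, mul_sum]
        simp_rw [mul_sum]
    _ ≤ exp (-(n * c)) *
          (((N + 1 : ℕ) : ℝ) ^ Fintype.card X * ((n + 1 : ℕ) : ℝ) ^ Fintype.card X) := by
        gcongr
        · exact sum_nonneg fun y _ => seqProb_empDist_nonneg y
        · exact sum_seqProb_empDist_le N
        · exact sum_seqProb_empDist_le n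
    _ = _ := by ring

lemma le_liminf_pairProb {α : ℝ} (hα : 0 ≤ α) {P Q : X → ℝ} (hP : IsDist P) (hQ : IsDist Q) (c : ℝ)
    (E : ∀ n : ℕ, (Fin (trainLen α n) → X) → (Fin n → X) → Prop)
    (hE : ∀ n, 0 < n → ∀ x y, E n x y → AbsCont (empDist x) P → AbsCont (empDist y) Q →
      c ≤ α * klDivR (empDist x) P + klDivR (empDist y) Q) :
    (c : EReal) ≤ liminf (fun n : ℕ =>
      (((n : ℝ)⁻¹ : ℝ) : EReal) * negLogE (pairProb P Q (E n))) atTop := by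
  refine le_liminf_negLogE (fun n => pairProb_nonneg hP.1 hQ.1 _)
    (C := (2 * (α + 2)) ^ Fintype.card X) (by positivity) (2 * Fintype.card X) c ?_
  filter_upwards [eventually_gt_atTop 0] with n hn
  refine (pairProb_le (le_trainLen α n) hP hQ c (hE n hn)).trans ?_
  have hN := trainLen_add_one_le hα hn
  have hn' : ((n + 1 : ℕ) : ℝ) ≤ 2 * n := by
    have : (1 : ℝ) ≤ n := by exact_mod_cast hn
    push_cast; linarith
  calc _ = (((trainLen α n + 1 : ℕ) : ℝ) * ((n + 1 : ℕ) : ℝ)) ^ Fintype.card X *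
          exp (-(n * c)) := by
        rw [mul_pow]
    _ ≤ ((α + 2) * n * (2 * n)) ^ Fintype.card X * exp (-(n * c)) := by gcongr
    _ = _ := by
      rw [show (α + 2) * n * (2 * n) = 2 * (α + 2) * n ^ 2 by ring, mul_pow, ← pow_mul]

end Events

theorem gutman_exponents_general {X : Type*} [Fintype X] [DecidableEq X]
    (α lam : ℝ) (hα : 0 < α)
    (P1 P2 : X → ℝ) (h1 : IsDist P1) (h2 : IsDist P2) :
    (lam : EReal) ≤ Filter.liminf (fun n : ℕ =>
        (((n : ℝ)⁻¹ : ℝ) : EReal) * negLogE (beta1 (gutman α lam n) P1 P2)) Filter.atTop ∧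
    Fexp P1 P2 α lam ≤ Filter.liminf (fun n : ℕ =>
        (((n : ℝ)⁻¹ : ℝ) : EReal) * negLogE (beta2 (gutman α lam n) P1 P2)) Filter.atTop := by
  have hT1 {n : ℕ} (hn : 0 < n) (x : Fin (trainLen α n) → X) : IsDist (empDist x) :=
    isDist_empDist (trainLen_pos hα hn) x
  simp_rw [beta1_gutman h2.2, beta2_gutman h2.2]
  constructor
  · refine le_liminf_pairProb hα.le h1 h1 lam _ fun n hn x y hlt hx hy => ?_
    exact hlt.le.trans (GJS_le_add_klDivR hα (hT1 hn x) (isDist_empDist hn y) h1 hx hy)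
  · refine EReal.ge_of_forall_gt_iff_ge.1 fun c hc =>
      le_liminf_pairProb hα.le h1 h2 c _ fun n hn x y hle hx hy => ?_
    exact EReal.coe_le_coe_iff.1
      (hc.trans_le (Fexp_le (hT1 hn x) (isDist_empDist hn y) hle hx hy)).le

/-- Theorem 1, parts 1a and 1b, of Gutman / the paper:
Gutman's test with threshold `λ > 0` satisfies, for every pair of distributions
`(P1, P2)`, `liminf_n -(1/n) log β₁(φ_n^Gut | P1, P2) ≥ λ` and
`liminf_n -(1/n) log β₂(φ_n^Gut | P1, P2) ≥ F(P1, P2, α, λ)`. -/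
theorem gutman_exponents {X : Type*} [Fintype X] [DecidableEq X]
    (α lam : ℝ) (hα : 0 < α) (hlam : 0 < lam)
    (P1 P2 : X → ℝ) (h1 : IsDist P1) (h2 : IsDist P2) :
    (lam : EReal) ≤ Filter.liminf (fun n : ℕ =>
        (((n : ℝ)⁻¹ : ℝ) : EReal) * negLogE (beta1 (gutman α lam n) P1 P2)) Filter.atTop ∧
    Fexp P1 P2 α lam ≤ Filter.liminf (fun n : ℕ =>
        (((n : ℝ)⁻¹ : ℝ) : EReal) * negLogE (beta2 (gutman α lam n) P1 P2)) Filter.atTop :=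
  gutman_exponents_general α lam hα P1 P2 h1 h2

end Classification
end

section
/- For any test ψ_n in the M-ary classification-with-rejection setting and any κ = (κ1,…,κM) ∈ [0,1]^M, let κ_min := min_{t∈[M]} κ_t and κ_+ := Σ_{t∈[M]} κ_t. Then there exists a type-based test ψ_n^T (a test whose output depends on (X1^N,…,XM^N,Y^n) only through the tuple of types (T̂_{X1^N},…,T̂_{XM^N},T̂_{Y^n})) such that for every tuple P of M distributions on X and every j ∈ [M]: β_j(ψ_n|P) ≥ κ_min·β_j(ψ_n^T|P) and ζ_j(ψ_n|P) ≥ (1−κ_+)·ζ_j(ψ_n^T|P). -/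
open Filter Topology MeasureTheory

namespace Classification

variable {X : Type*} [Fintype X] [DecidableEq X]

/-!
Group the data `(X^N, Y^n)` by its tuple of types. Under every hypothesis all data with the same
types are equally likely, so on each type class only the fraction of data on which `ψ` takes each
decision matters. The type-based test declares `H_k` on a class where `ψ` declares `H_k` on at
least a `κ_k` fraction of it, and rejects where there is no such `k`. An error of the new test on a
class is then matched by errors of `ψ` on a fraction `κ_k ≥ κ_min` of it, and a rejection by
rejections of `ψ` on a fraction at least `1 - ∑ κ_t` of it.
-/

open Finset

section TypeRule

variable {D S ι : Type*} [Fintype D] [DecidableEq S] [Fintype ι] [DecidableEq ι]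

theorem mul_sum_le_sum_of_mul_card_fiber_le (T : D → S) {w : D → ℝ}
    (hw : w.FactorsThrough T) (hw0 : ∀ d, 0 ≤ w d) (p q : D → Prop)
    [DecidablePred p] [DecidablePred q] (c : ℝ)
    (h : ∀ s, c * #{d | T d = s ∧ p d} ≤ #{d | T d = s ∧ q d}) :
    c * ∑ d with p d, w d ≤ ∑ d with q d, w d := by
  have fiberwise : ∀ r : D → Prop, [DecidablePred r] → ∑ d with r d, w d =
      ∑ s ∈ univ.image T, ∑ d with T d = s ∧ r d, w d := by
    intro r _
    rw [← sum_fiberwise_of_maps_to (g := T) (t := univ.image T)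
      (fun d _ => mem_image_of_mem T (mem_univ d))]
    simp only [filter_filter, and_comm]
  have fiber_const : ∀ (r : D → Prop) [DecidablePred r] (d₀ : D),
      ∑ d with T d = T d₀ ∧ r d, w d = #{d | T d = T d₀ ∧ r d} * w d₀ := by
    intro r _ d₀
    rw [sum_eq_card_nsmul fun d hd => hw (mem_filter.mp hd).2.1, nsmul_eq_mul]
  rw [fiberwise p, fiberwise q, mul_sum]
  refine sum_le_sum fun s hs => ?_
  obtain ⟨d₀, -, rfl⟩ := mem_image.mp hs
  rw [fiber_const p, fiber_const q, ← mul_assoc]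
  exact mul_le_mul_of_nonneg_right (h (T d₀)) (hw0 d₀)

def fiberCount (T : D → S) (ψ : D → Option ι) (s : S) (o : Option ι) : ℕ :=
  #{d | T d = s ∧ ψ d = o}

noncomputable def typeRule (T : D → S) (ψ : D → Option ι) (κ : ι → ℝ) (s : S) :
    Option ι :=
  if h : ∃ k, κ k * #{d | T d = s} ≤ fiberCount T ψ s (some k) then some h.choose else none

theorem mul_card_le_fiberCount_of_typeRule_eq_some {T : D → S} {ψ : D → Option ι}
    {κ : ι → ℝ} {s : S} {k : ι} (h : typeRule T ψ κ s = some k) :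
    κ k * #{d | T d = s} ≤ fiberCount T ψ s (some k) := by
  unfold typeRule at h
  split_ifs at h with hk
  exact Option.some_injective _ h ▸ hk.choose_spec

theorem card_eq_fiberCount_none_add_sum (T : D → S) (ψ : D → Option ι) (s : S) :
    #{d | T d = s} = fiberCount T ψ s none + ∑ k, fiberCount T ψ s (some k) := by
  rw [card_eq_sum_card_fiberwise (f := ψ) (t := univ) (fun d _ => mem_coe.mpr (mem_univ _)),
    Fintype.sum_option]
  simp only [fiberCount, filter_filter]

theorem mul_card_le_fiberCount_none_of_typeRule_eq_none {T : D → S} {ψ : D → Option ι}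
    {κ : ι → ℝ} {s : S} (h : typeRule T ψ κ s = none) :
    (1 - ∑ k, κ k) * #{d | T d = s} ≤ fiberCount T ψ s none := by
  unfold typeRule at h
  split_ifs at h with hk
  push Not at hk
  have hsum : (∑ k, (fiberCount T ψ s (some k) : ℝ)) ≤ (∑ k, κ k) * #{d | T d = s} := by
    rw [sum_mul]
    exact sum_le_sum fun k _ => (hk k).le
  have hcard := card_eq_fiberCount_none_add_sum T ψ s
  rw [← Nat.cast_inj (R := ℝ), Nat.cast_add, Nat.cast_sum] at hcard
  linarith

theorem card_filter_eq_and_comp (T : D → S) (s : S) (r : S → Prop) [DecidablePred r] :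
    #{d | T d = s ∧ r (T d)} = if r s then #{d | T d = s} else 0 := by
  split_ifs with hr
  · exact congrArg card <| filter_congr fun d _ => by
      constructor <;> rintro ⟨rfl, _⟩ <;> simp [hr]
  · exact card_eq_zero.mpr (filter_eq_empty_iff.mpr <| by rintro d - ⟨rfl, h⟩; exact hr h)

theorem mul_card_typeRule_le (T : D → S) (ψ : D → Option ι) {κ : ι → ℝ}
    (E : Option ι → Prop) [DecidablePred E] (hE : ¬E none) {c : ℝ} (hc : ∀ k, c ≤ κ k)
    (s : S) :
    c * #{d | T d = s ∧ E (typeRule T ψ κ (T d))} ≤ #{d | T d = s ∧ E (ψ d)} := by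
  rw [card_filter_eq_and_comp T s (fun s => E (typeRule T ψ κ s))]
  split_ifs with hs
  · obtain ⟨k, hk⟩ := Option.ne_none_iff_exists'.mp fun h => hE (h ▸ hs)
    have hfiber : fiberCount T ψ s (some k) ≤ #{d | T d = s ∧ E (ψ d)} :=
      card_le_card (monotone_filter_right _ fun d _ ⟨hd, hψ⟩ => ⟨hd, hψ ▸ hk ▸ hs⟩)
    calc c * #{d | T d = s} ≤ κ k * #{d | T d = s} := by gcongr; exact hc k
      _ ≤ fiberCount T ψ s (some k) := mul_card_le_fiberCount_of_typeRule_eq_some hk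
      _ ≤ #{d | T d = s ∧ E (ψ d)} := by exact_mod_cast hfiber
  · simp

theorem mul_card_typeRule_none_le (T : D → S) (ψ : D → Option ι) (κ : ι → ℝ) (s : S) :
    (1 - ∑ k, κ k) * #{d | T d = s ∧ typeRule T ψ κ (T d) = none} ≤
      #{d | T d = s ∧ ψ d = none} := by
  rw [card_filter_eq_and_comp T s (fun s => typeRule T ψ κ s = none)]
  split_ifs with hs
  · exact mul_card_le_fiberCount_none_of_typeRule_eq_none hs
  · simp

variable {T : D → S} {w : D → ℝ}

theorem mul_sum_typeRule_le (ψ : D → Option ι) {κ : ι → ℝ} (hw : w.FactorsThrough T)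
    (hw0 : ∀ d, 0 ≤ w d) (E : Option ι → Prop) [DecidablePred E] (hE : ¬E none) {c : ℝ}
    (hc : ∀ k, c ≤ κ k) :
    c * ∑ d with E (typeRule T ψ κ (T d)), w d ≤ ∑ d with E (ψ d), w d :=
  mul_sum_le_sum_of_mul_card_fiber_le T hw hw0 _ _ c (mul_card_typeRule_le T ψ E hE hc)

theorem one_sub_sum_mul_sum_typeRule_none_le (ψ : D → Option ι) (κ : ι → ℝ)
    (hw : w.FactorsThrough T) (hw0 : ∀ d, 0 ≤ w d) :
    (1 - ∑ k, κ k) * ∑ d with typeRule T ψ κ (T d) = none, w d ≤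
      ∑ d with ψ d = none, w d :=
  mul_sum_le_sum_of_mul_card_fiber_le T hw hw0 _ _ _ (mul_card_typeRule_none_le T ψ κ)

end TypeRule

section MTest

variable {X : Type*} {M : ℕ} {α : ℝ} {n : ℕ}

theorem seqProb_eq_prod_pow_card [Fintype X] [DecidableEq X] (P : X → ℝ) {m : ℕ}
    (x : Fin m → X) : seqProb P x = ∏ a, P a ^ #{i | x i = a} := by
  rw [seqProb, ← prod_fiberwise univ x (fun i => P (x i))]
  refine prod_congr rfl fun a _ => ?_
  rw [prod_congr rfl fun i hi => by rw [(mem_filter.mp hi).2], prod_const]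

theorem seqProb_eq_of_empDist_eq [Fintype X] [DecidableEq X] (P : X → ℝ) {m : ℕ}
    {x x' : Fin m → X} (h : empDist x = empDist x') : seqProb P x = seqProb P x' := by
  rcases Nat.eq_zero_or_pos m with rfl | hm
  · rw [Subsingleton.elim x x']
  have hcount : ∀ a, #{i | x i = a} = #{i | x' i = a} := fun a => by
    have ha := congrFun h a
    simp only [empDist] at ha
    rw [div_left_inj' (Nat.cast_ne_zero.mpr hm.ne')] at ha
    exact_mod_cast ha
  simp only [seqProb_eq_prod_pow_card, hcount]

abbrev MSample (X : Type*) (M : ℕ) (α : ℝ) (n : ℕ) : Type _ :=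
  (Fin M → Fin (trainLen α n) → X) × (Fin n → X)

noncomputable def typeTuple [DecidableEq X] (d : MSample X M α n) :
    (Fin M → X → ℝ) × (X → ℝ) :=
  (fun i => empDist (d.1 i), empDist d.2)

noncomputable def jointProb (P : Fin M → X → ℝ) (j : Fin M) (d : MSample X M α n) : ℝ :=
  (∏ i, seqProb (P i) (d.1 i)) * seqProb (P j) d.2

theorem jointProb_factorsThrough [Fintype X] [DecidableEq X] (P : Fin M → X → ℝ) (j : Fin M) :
    (jointProb (α := α) (n := n) P j).FactorsThrough typeTuple := by
  intro d d' h
  simp only [typeTuple, Prod.mk.injEq, funext_iff] at h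
  simp only [jointProb, seqProb_eq_of_empDist_eq _ (funext (h.1 _)),
    seqProb_eq_of_empDist_eq _ (funext h.2)]

theorem jointProb_nonneg {P : Fin M → X → ℝ} (hP : ∀ i x, 0 ≤ P i x) (j : Fin M)
    (d : MSample X M α n) : 0 ≤ jointProb P j d := by
  have hseq : ∀ i {m} (x : Fin m → X), 0 ≤ seqProb (P i) x := fun i _ x =>
    prod_nonneg fun _ _ => hP i _
  exact mul_nonneg (prod_nonneg fun i _ => hseq i _) (hseq j _)

theorem betaM_eq_sum_jointProb [Fintype X] (ψ : MTest X M α n) (P : Fin M → X → ℝ)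
    (j : Fin M) :
    betaM ψ P j = ∑ d with ψ d.1 d.2 ≠ some j ∧ ψ d.1 d.2 ≠ none, jointProb P j d := by
  rw [betaM, ← Fintype.sum_prod_type', sum_filter]
  rfl

theorem zetaM_eq_sum_jointProb [Fintype X] (ψ : MTest X M α n) (P : Fin M → X → ℝ)
    (j : Fin M) :
    zetaM ψ P j = ∑ d with ψ d.1 d.2 = none, jointProb P j d := by
  rw [zetaM, ← Fintype.sum_prod_type', sum_filter]
  rfl

open Classical in
noncomputable def typeBasedTest [Fintype X] [DecidableEq X] (ψ : MTest X M α n)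
    (κ : Fin M → ℝ) : MTest X M α n :=
  fun xs y => typeRule typeTuple (fun d => ψ d.1 d.2) κ (typeTuple (xs, y))

theorem typeBasedM_typeBasedTest [Fintype X] [DecidableEq X] (ψ : MTest X M α n)
    (κ : Fin M → ℝ) : TypeBasedM (typeBasedTest ψ κ) := by
  intro xs xs' y y' hxs hy
  simp only [typeBasedTest, typeTuple, funext hxs, hy]

end MTest

theorem exists_type_based_test_M_general {X : Type*} [Fintype X] [DecidableEq X]
    (M : ℕ) (α : ℝ) (n : ℕ)
    (ψ : MTest X M α n) (κ : Fin M → ℝ) :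
    ∃ ψT : MTest X M α n, TypeBasedM ψT ∧
      ∀ P : Fin M → X → ℝ, (∀ i, IsDist (P i)) → ∀ j : Fin M,
        sInf (Set.range κ) * betaM ψT P j ≤ betaM ψ P j ∧
        (1 - ∑ t, κ t) * zetaM ψT P j ≤ zetaM ψ P j := by
  refine ⟨typeBasedTest ψ κ, typeBasedM_typeBasedTest ψ κ, fun P hP j => ?_⟩
  have hw := jointProb_factorsThrough (α := α) (n := n) P j
  have hw0 := jointProb_nonneg (α := α) (n := n) (fun i => (hP i).1) j
  simp only [betaM_eq_sum_jointProb, zetaM_eq_sum_jointProb]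
  exact ⟨mul_sum_typeRule_le _ hw hw0 (fun o => o ≠ some j ∧ o ≠ none) (by simp)
      fun k => csInf_le (Set.finite_range κ).bddBelow ⟨k, rfl⟩,
    one_sub_sum_mul_sum_typeRule_none_le _ κ hw hw0⟩

/-- Lemma 5 of the paper, M-ary version of Lemma 1: for any M-ary
test with rejection `ψ_n` and any `κ ∈ [0,1]^M` there is a type-based test `ψ_n^T`
with `β_j(ψ_n) ≥ κ_min β_j(ψ_n^T)` and `ζ_j(ψ_n) ≥ (1-κ₊) ζ_j(ψ_n^T)` for every
tuple of distributions and every `j`. -/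
theorem exists_type_based_test_M {X : Type*} [Fintype X] [DecidableEq X]
    (M : ℕ) (hM : 0 < M) (α : ℝ) (hα : 0 < α) (n : ℕ)
    (ψ : MTest X M α n) (κ : Fin M → ℝ) (hκ : ∀ t, κ t ∈ Set.Icc (0 : ℝ) 1) :
    ∃ ψT : MTest X M α n, TypeBasedM ψT ∧
      ∀ P : Fin M → X → ℝ, (∀ i, IsDist (P i)) → ∀ j : Fin M,
        sInf (Set.range κ) * betaM ψT P j ≤ betaM ψ P j ∧
        (1 - ∑ t, κ t) * zetaM ψT P j ≤ zetaM ψ P j :=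
  exists_type_based_test_M_general M α n ψ κ

end Classification
end
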